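/- Let X ⊆ P^r be a zero-dimensional closed subscheme that is the disjoint union of two closed subschemes Z and {q}, where q is a reduced point not contained in the linear span considerations of Z. If Z ⊆ P^r is m-regular (m ≥ 1), then X is (m+1)-regular. -/

import Mathlib

/-!
Since `q ∉ Supp Z`, the ideals `I_Z` and `m_q = (X_j - q_j)_j` are comaximal:
`1 - ∑ b_j (X_j - q_j) ∈ I_Z` for some polynomials `b_j`. Replacing each `b_j` by a
representative `s_j` of degree `≤ m - 1` modulo `I_Z` (this is the `m`-regularity of `Z`) keeps
`h = 1 - ∑ s_j (X_j - q_j)` in `I_Z`, now with `deg h ≤ m` and `h(q) = 1`. A degree `≤ m - 1`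
representative `f₀` of a function on `Z` is then corrected at `q` by `f₀ + (c - f₀(q)) h`.
-/

open MvPolynomial

/-- The maximal ideal of polynomials vanishing at the point `a` of affine `N`-space. -/
noncomputable def pointIdeal (N : ℕ) (a : Fin N → ℂ) : Ideal (MvPolynomial (Fin N) ℂ) :=
  Ideal.span (Set.range fun j => MvPolynomial.X j - MvPolynomial.C (a j))

namespace MvPolynomial

variable {σ : Type*}

theorem sub_C_eval_mem_span_X_sub_C {R : Type*} [CommRing R] (a : σ → R)
    (p : MvPolynomial σ R) :
    p - C (eval a p) ∈ Ideal.span (Set.range fun j => X j - C (a j)) := by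
  set I := Ideal.span (Set.range fun j => X j - C (a j))
  have hmk : Ideal.Quotient.mk I = (Ideal.Quotient.mk I).comp (C.comp (eval a)) := by
    refine ringHom_ext (fun r => by simp) (fun j => ?_)
    simpa using Ideal.Quotient.eq.2 (Ideal.subset_span ⟨j, rfl⟩ : X j - C (a j) ∈ I)
  exact Ideal.Quotient.eq.1 (RingHom.congr_fun hmk p)

theorem totalDegree_X_sub_C_le {R : Type*} [CommRing R] (j : σ) (r : R) :
    (X j - C r).totalDegree ≤ 1 :=
  (totalDegree_sub _ _).trans <| max_le ((totalDegree_monomial_le _ _).trans (by simp)) (by simp)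

variable [Fintype σ] {K : Type*} [Field K] {I : Ideal (MvPolynomial σ K)} {a : σ → K}

theorem exists_one_sub_sum_mem_of_not_le_span_X_sub_C
    (ha : ¬ I ≤ Ideal.span (Set.range fun j => X j - C (a j))) :
    ∃ b : σ → MvPolynomial σ K, 1 - ∑ j, b j * (X j - C (a j)) ∈ I := by
  obtain ⟨p, hpI, hpa⟩ := Set.not_subset.1 ha
  have hp0 : eval a p ≠ 0 := fun h0 => hpa (by simpa [h0] using sub_C_eval_mem_span_X_sub_C a p)
  have hnorm : 1 - C (eval a p)⁻¹ * p ∈ Ideal.span (Set.range fun j => X j - C (a j)) := by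
    have h := Ideal.mul_mem_left _ (C (-(eval a p)⁻¹)) (sub_C_eval_mem_span_X_sub_C a p)
    convert h using 1
    rw [mul_sub, ← C_mul, neg_mul, inv_mul_cancel₀ hp0, C_neg, C_neg, C_1]
    ring
  obtain ⟨b, hb⟩ := Submodule.mem_span_range_iff_exists_fun _ |>.1 hnorm
  refine ⟨b, ?_⟩
  simp only [smul_eq_mul] at hb
  rw [hb, sub_sub_cancel]
  exact I.mul_mem_left _ hpI

theorem exists_mem_totalDegree_le_eval_eq_one {m : ℕ}
    (ha : ¬ I ≤ Ideal.span (Set.range fun j => X j - C (a j)))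
    (hreg : ∀ g : MvPolynomial σ K, ∃ f, f.totalDegree + 1 ≤ m ∧ f - g ∈ I) :
    ∃ h ∈ I, h.totalDegree ≤ m ∧ eval a h = 1 := by
  obtain ⟨b, hb⟩ := exists_one_sub_sum_mem_of_not_le_span_X_sub_C ha
  choose s hs_deg hs_mem using fun j => hreg (b j)
  refine ⟨1 - ∑ j, s j * (X j - C (a j)), ?_, ?_, by simp⟩
  · have hdiff : (1 - ∑ j, s j * (X j - C (a j))) =
        (1 - ∑ j, b j * (X j - C (a j))) - ∑ j, (s j - b j) * (X j - C (a j)) := by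
      simp only [sub_mul, Finset.sum_sub_distrib]
      ring
    rw [hdiff]
    exact I.sub_mem hb (I.sum_mem fun j _ => I.mul_mem_right _ (hs_mem j))
  · refine (totalDegree_sub _ _).trans (max_le (by simp) ?_)
    refine totalDegree_finsetSum_le fun j _ => (totalDegree_mul _ _).trans ?_
    exact (Nat.add_le_add_left (totalDegree_X_sub_C_le j (a j)) _).trans (hs_deg j)

end MvPolynomial

theorem stmt13_general (N m : ℕ)
    (IZ : Ideal (MvPolynomial (Fin N) ℂ))
    (q : Fin N → ℂ) (hq : ¬ IZ ≤ pointIdeal N q)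
    (hreg : ∀ g : MvPolynomial (Fin N) ℂ,
      ∃ f, f.totalDegree + 1 ≤ m ∧ f - g ∈ IZ) :
    ∀ (g : MvPolynomial (Fin N) ℂ) (c : ℂ),
      ∃ f, f.totalDegree ≤ m ∧ f - g ∈ IZ ∧ MvPolynomial.eval q f = c := by
  intro g c
  obtain ⟨h, hIZ, hdeg, hq1⟩ := exists_mem_totalDegree_le_eval_eq_one hq hreg
  obtain ⟨f₀, hf₀_deg, hf₀_mem⟩ := hreg g
  refine ⟨f₀ + C (c - eval q f₀) * h, ?_, ?_, by simp [hq1]⟩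
  · refine (totalDegree_add _ _).trans (max_le (by omega) ?_)
    exact (totalDegree_mul _ _).trans (by rw [totalDegree_C, zero_add]; exact hdeg)
  · rw [add_sub_right_comm]
    exact IZ.add_mem hf₀_mem (IZ.mul_mem_left _ hIZ)

/-- Let `X ⊆ P^r` be a zero-dimensional closed subscheme which is the
disjoint union of a closed subscheme `Z` and a reduced point `q` (placed in a standard affine
chart; `Z` is cut out by the ideal `IZ` with Artinian quotient, and `q ∉ Supp Z`, i.e.
`IZ ⊄ m_q`).  If `Z` is `m`-regular (`m ≥ 1`), which for the finite scheme `Z` means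
`(m-1)`-normality (every function on `Z` is the restriction of a polynomial of degree
`≤ m - 1`), then `X = Z ⊔ {q}` is `(m+1)`-regular, i.e. `m`-normal: every function on `X`
(a function on `Z` together with a value `c` at `q`) is the restriction of a polynomial of
degree `≤ m`. -/
theorem stmt13 (N m : ℕ) (hm : 1 ≤ m)
    (IZ : Ideal (MvPolynomial (Fin N) ℂ)) (hZne : IZ ≠ ⊤)
    (hart : IsArtinianRing (MvPolynomial (Fin N) ℂ ⧸ IZ))
    (q : Fin N → ℂ) (hq : ¬ IZ ≤ pointIdeal N q)
    (hreg : ∀ g : MvPolynomial (Fin N) ℂ,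
      ∃ f, f.totalDegree + 1 ≤ m ∧ f - g ∈ IZ) :
    ∀ (g : MvPolynomial (Fin N) ℂ) (c : ℂ),
      ∃ f, f.totalDegree ≤ m ∧ f - g ∈ IZ ∧ MvPolynomial.eval q f = c :=
  stmt13_general N m IZ q hq hreg
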